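/- arXiv:math/9803075 — 3 statements merged into one kernel-verified Lean document; each statement's English description precedes it below -/
import Mathlib

section
/- Under the hypotheses of the preceding lemma (a_0 ≤ a(x) ≤ a_1, v_0 ≤ V(x) ≤ v_1 on an interval of length L = β−α), the enclosure intervals [a_0 π² i²/L² + v_0, a_1 π² i²/L² + v_1] are pairwise disjoint for all eigenvalues below E′ provided v_1 − v_0 ≤ a_0 π²/L², v_1 − v_0 ≤ M² a_0 π²/L² − (M−1)² a_1 π²/L², where M is the smallest integer with E′ ≤ v_0 + M² a_0 π²/L². Precisely: for all integers 0 ≤ i < j ≤ M, the upper endpoint of the i-th interval is at most the lower endpoint of the j-th interval. -/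
/-!
Since `j ≥ i + 1`, it suffices that `v₁ − v₀ ≤ A₀(i + 1)² − A₁i²` with `Aₖ = aₖπ²/L²`. As
`A₀ ≤ A₁`, the right-hand side is concave in `i`, so on `0 ≤ i ≤ M − 1` it is smallest at
an endpoint, and the two endpoint values are exactly the two hypotheses on `v₁ − v₀`.
-/

open Real Set

theorem concaveOn_mul_add_one_sq_sub_mul_sq {a b : ℝ} (hab : a ≤ b) :
    ConcaveOn ℝ univ fun t : ℝ ↦ a * (t + 1) ^ 2 - b * t ^ 2 := by
  have affine : ConcaveOn ℝ univ fun t : ℝ ↦ 2 * a * t + a :=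
    (((2 * a) • LinearMap.id : ℝ →ₗ[ℝ] ℝ).concaveOn convex_univ).add_const a
  have quadratic : ConvexOn ℝ univ fun t : ℝ ↦ (b - a) * t ^ 2 :=
    (even_two.convexOn_pow (𝕜 := ℝ)).smul (sub_nonneg.2 hab)
  refine (affine.sub quadratic).congr fun t _ ↦ ?_
  simp only [Pi.sub_apply]
  ring

theorem le_mul_sq_sub_mul_sq_of_le_endpoints {a b d N x y : ℝ} (ha : 0 ≤ a) (hab : a ≤ b)
    (h0 : d ≤ a) (hN : d ≤ a * (N + 1) ^ 2 - b * N ^ 2)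
    (hx : 0 ≤ x) (hxN : x ≤ N) (hxy : x + 1 ≤ y) :
    d ≤ a * y ^ 2 - b * x ^ 2 := by
  have hmin := (concaveOn_mul_add_one_sq_sub_mul_sq hab).min_le_of_mem_Icc
    (mem_univ 0) (mem_univ N) ⟨hx, hxN⟩
  have hendpoints : d ≤ min (a * (0 + 1) ^ 2 - b * 0 ^ 2) (a * (N + 1) ^ 2 - b * N ^ 2) :=
    le_min (by simpa using h0) hN
  calc d ≤ a * (x + 1) ^ 2 - b * x ^ 2 := hendpoints.trans hmin
    _ ≤ a * y ^ 2 - b * x ^ 2 := by gcongr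

theorem enclosure_intervals_disjoint_general
    (a0 a1 v0 v1 L : ℝ) (M : ℕ)
    (ha0 : 0 < a0) (haa : a0 ≤ a1)
    (h1 : v1 - v0 ≤ a0 * π ^ 2 / L ^ 2)
    (h2 : v1 - v0 ≤ (M : ℝ) ^ 2 * a0 * π ^ 2 / L ^ 2
      - ((M : ℝ) - 1) ^ 2 * a1 * π ^ 2 / L ^ 2) :
    ∀ i j : ℕ, i < j → j ≤ M →
      a1 * π ^ 2 * (i : ℝ) ^ 2 / L ^ 2 + v1 ≤ a0 * π ^ 2 * (j : ℝ) ^ 2 / L ^ 2 + v0 := by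
  intro i j hij hjM
  have hiM : (i : ℝ) + 1 ≤ M := by exact_mod_cast hij.trans_le hjM
  have key := le_mul_sq_sub_mul_sq_of_le_endpoints (N := (M : ℝ) - 1)
    (a := a0 * π ^ 2 / L ^ 2) (b := a1 * π ^ 2 / L ^ 2) (by positivity) (by gcongr) h1
    (by linear_combination h2) (Nat.cast_nonneg i) (by linarith)
    (by exact_mod_cast hij : (i : ℝ) + 1 ≤ j)
  linear_combination key

/-- Disjointness of the spectral enclosure intervals
`[a₀π²i²/L² + v₀, a₁π²i²/L² + v₁]`: if `v₁ − v₀ ≤ a₀π²/L²` and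
`v₁ − v₀ ≤ M²a₀π²/L² − (M−1)²a₁π²/L²`, where `M` is the smallest positive integer with
`E′ ≤ v₀ + M²a₀π²/L²`, then for all `0 ≤ i < j ≤ M` the upper endpoint of the `i`-th
interval is at most the lower endpoint of the `j`-th interval. -/
theorem enclosure_intervals_disjoint
    (a0 a1 v0 v1 L E' : ℝ) (M : ℕ)
    (ha0 : 0 < a0) (haa : a0 ≤ a1) (hv : v0 ≤ v1) (hL : 0 < L)
    (hMpos : 0 < M)
    (hME : E' ≤ v0 + (M : ℝ) ^ 2 * a0 * π ^ 2 / L ^ 2)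
    (hMmin : ∀ k : ℕ, 0 < k → E' ≤ v0 + (k : ℝ) ^ 2 * a0 * π ^ 2 / L ^ 2 → M ≤ k)
    (h1 : v1 - v0 ≤ a0 * π ^ 2 / L ^ 2)
    (h2 : v1 - v0 ≤ (M : ℝ) ^ 2 * a0 * π ^ 2 / L ^ 2
      - ((M : ℝ) - 1) ^ 2 * a1 * π ^ 2 / L ^ 2) :
    ∀ i j : ℕ, i < j → j ≤ M →
      a1 * π ^ 2 * (i : ℝ) ^ 2 / L ^ 2 + v1 ≤ a0 * π ^ 2 * (j : ℝ) ^ 2 / L ^ 2 + v0 :=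
  enclosure_intervals_disjoint_general a0 a1 v0 v1 L M ha0 haa h1 h2
end

section
/- Let (X,E) be a finite connected graph with edge weights b : E → (0,∞) satisfying b(e) = b(ē), and A the weighted Laplacian with quadratic form Q(f) = (1/2)Σ_{(x,y)∈E} b(x,y)|f(x)−f(y)|². Suppose Γ is a family of paths, one path γ_{x,y} joining each ordered pair (x,y) ∈ X×X, such that (i) each path has weighted length |γ_{x,y}| = Σ_{edges e of γ} b(e)^{-1} ≤ α d, and (ii) every edge e lies on at most β d |X| of the paths in Γ, where d is the diameter of X in the weighted path metric. Then the first non-zero eigenvalue μ_1 of A satisfies μ_1 ≥ 1/(α β d²). -/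
/-!
Let `V(φ) = ∑ₓ ‖φ x - m‖²`, `m` the mean of `φ`; summing `‖φ x - φ y‖²` over ordered pairs
gives `2 |X| V(φ)`. Along `γ x y`, the triangle inequality and Cauchy–Schwarz with weights `b e`
bound `‖φ x - φ y‖²` by `|γ x y| ≤ α d` times the part of `Q(φ)` carried by the edges of
`γ x y`. Summing over pairs charges each edge at most `β d |X|` times, so
`2 |X| V(φ) ≤ α d · β d |X| · Q(φ)`.
-/

open Finset

theorem List.sum_toFinset_le_sum_map {α M : Type*} [DecidableEq α] [AddCommMonoid M]
    [PartialOrder M] [IsOrderedAddMonoid M] {l : List α} {f : α → M} (hf : ∀ a ∈ l, 0 ≤ f a) :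
    ∑ a ∈ l.toFinset, f a ≤ (l.map f).sum := by
  rw [Finset.sum_list_map_count]
  refine Finset.sum_le_sum fun a ha => ?_
  have hcount : 1 ≤ l.count a := List.count_pos_iff.2 (List.mem_toFinset.1 ha)
  simpa using nsmul_le_nsmul_left (hf a (List.mem_toFinset.1 ha)) hcount

theorem Finset.sum_sum_le_mul_sum {ι α : Type*} [DecidableEq α] (s : Finset ι) (t : Finset α)
    {T : ι → Finset α} (hT : ∀ i ∈ s, T i ⊆ t) {f : α → ℝ} (hf : ∀ a ∈ t, 0 ≤ f a) {K : ℝ}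
    (hK : ∀ a ∈ t, (#{i ∈ s | a ∈ T i} : ℝ) ≤ K) :
    ∑ i ∈ s, ∑ a ∈ T i, f a ≤ K * ∑ a ∈ t, f a := by
  calc ∑ i ∈ s, ∑ a ∈ T i, f a = ∑ i ∈ s, ∑ a ∈ t, if a ∈ T i then f a else 0 :=
        sum_congr rfl fun i hi => by rw [sum_ite_mem, inter_eq_right.2 (hT i hi)]
    _ = ∑ a ∈ t, (#{i ∈ s | a ∈ T i} : ℝ) * f a := by
        rw [sum_comm]
        simp only [sum_ite, sum_const_zero, add_zero, sum_const, nsmul_eq_mul]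
    _ ≤ ∑ a ∈ t, K * f a := sum_le_sum fun a ha => mul_le_mul_of_nonneg_right (hK a ha) (hf a ha)
    _ = K * ∑ a ∈ t, f a := (mul_sum _ _ _).symm

theorem sum_sum_norm_sub_sq {ι E : Type*} [Fintype ι] [SeminormedAddCommGroup E]
    [InnerProductSpace ℝ E] (a : ι → E) :
    ∑ i, ∑ j, ‖a i - a j‖ ^ 2 = 2 * Fintype.card ι * ∑ i, ‖a i‖ ^ 2 - 2 * ‖∑ i, a i‖ ^ 2 := by
  simp only [norm_sub_sq_real, sum_add_distrib, sum_sub_distrib, ← mul_sum, ← inner_sum,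
    ← sum_inner, real_inner_self_eq_norm_sq, sum_const, card_univ, nsmul_eq_mul]
  ring

/-- `‖φ - ⟨φ, φ₀⟩ φ₀‖²`, with `φ₀` the normalised constant function. -/
noncomputable def sumSqDev {X : Type*} [Fintype X] (φ : X → ℂ) : ℝ :=
  ∑ x, ‖φ x - (∑ y, φ y) / (Fintype.card X : ℂ)‖ ^ 2

theorem sumSqDev_nonneg {X : Type*} [Fintype X] (φ : X → ℂ) : 0 ≤ sumSqDev φ :=
  sum_nonneg fun _ _ => sq_nonneg _

theorem sum_sum_norm_sub_sq_eq_mul_sumSqDev {X : Type*} [Fintype X] [Nonempty X] (φ : X → ℂ) :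
    ∑ x, ∑ y, ‖φ x - φ y‖ ^ 2 = 2 * Fintype.card X * sumSqDev φ := by
  set m := (∑ y, φ y) / (Fintype.card X : ℂ)
  have hcard : (Fintype.card X : ℂ) ≠ 0 := Nat.cast_ne_zero.2 Fintype.card_ne_zero
  have hcentred : ∑ x, (φ x - m) = 0 := by
    rw [sum_sub_distrib, sum_const, card_univ, nsmul_eq_mul, mul_div_cancel₀ _ hcard, sub_self]
  simpa [hcentred, sumSqDev] using sum_sum_norm_sub_sq (fun x => φ x - m)

theorem sumSqDev_pos_of_ne {X : Type*} [Fintype X] {φ : X → ℂ} {x₀ x₁ : X}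
    (h : φ x₀ ≠ φ x₁) : 0 < sumSqDev φ := by
  have : Nonempty X := ⟨x₀⟩
  have hpair : 0 < ∑ x, ∑ y, ‖φ x - φ y‖ ^ 2 :=
    calc 0 < ‖φ x₀ - φ x₁‖ ^ 2 := pow_pos (norm_pos_iff.2 (sub_ne_zero.2 h)) 2
      _ ≤ ∑ y, ‖φ x₀ - φ y‖ ^ 2 :=
        single_le_sum (f := fun y => ‖φ x₀ - φ y‖ ^ 2) (fun _ _ => sq_nonneg _) (mem_univ x₁)
      _ ≤ ∑ x, ∑ y, ‖φ x - φ y‖ ^ 2 :=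
        single_le_sum (f := fun x => ∑ y, ‖φ x - φ y‖ ^ 2)
          (fun _ _ => sum_nonneg fun _ _ => sq_nonneg _) (mem_univ x₀)
  rw [sum_sum_norm_sub_sq_eq_mul_sumSqDev] at hpair
  exact pos_of_mul_pos_right hpair (by positivity)

def normDiff {X E : Type*} [SeminormedAddCommGroup E] (φ : X → E) : Sym2 X → ℝ :=
  Sym2.lift ⟨fun u v => ‖φ u - φ v‖, fun _ _ => norm_sub_rev _ _⟩

@[simp]
theorem normDiff_mk {X E : Type*} [SeminormedAddCommGroup E] (φ : X → E) (u v : X) :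
    normDiff φ s(u, v) = ‖φ u - φ v‖ :=
  rfl

theorem normDiff_nonneg {X E : Type*} [SeminormedAddCommGroup E] (φ : X → E) (e : Sym2 X) :
    0 ≤ normDiff φ e :=
  Sym2.ind (fun u v => norm_nonneg (φ u - φ v)) e

namespace SimpleGraph

variable {X : Type*} {G : SimpleGraph X}

noncomputable def Walk.weightedLength (b : Sym2 X → ℝ) {x y : X} (w : G.Walk x y) : ℝ :=
  (w.edges.map fun e => (b e)⁻¹).sum

theorem Walk.weightedLength_nonneg {b : Sym2 X → ℝ} (hb : ∀ e ∈ G.edgeSet, 0 < b e) {x y : X}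
    (w : G.Walk x y) : 0 ≤ w.weightedLength b :=
  List.sum_nonneg <| by
    simpa using fun e he => (hb e (w.edges_subset_edgeSet he)).le

theorem Walk.weightedLength_eq_zero_of_subsingleton [Subsingleton X] (b : Sym2 X → ℝ)
    {x y : X} (w : G.Walk x y) : w.weightedLength b = 0 := by
  cases w with
  | nil => rfl
  | cons h _ => exact absurd (Subsingleton.elim _ _) (G.ne_of_adj h)

theorem iSup_iInf_weightedLength_eq_zero [Subsingleton X] (b : Sym2 X → ℝ) :
    ⨆ p : X × X, ⨅ w : G.Walk p.1 p.2, w.weightedLength b = 0 := by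
  simp [Walk.weightedLength_eq_zero_of_subsingleton]

theorem Walk.sum_inv_le_weightedLength [DecidableEq X] {b : Sym2 X → ℝ}
    (hb : ∀ e ∈ G.edgeSet, 0 < b e) {x y : X} (w : G.Walk x y) :
    ∑ e ∈ w.edges.toFinset, (b e)⁻¹ ≤ w.weightedLength b :=
  List.sum_toFinset_le_sum_map fun e he => (inv_pos.2 (hb e (w.edges_subset_edgeSet he))).le

theorem Walk.norm_sub_le_sum_normDiff {E : Type*} [SeminormedAddCommGroup E] (φ : X → E)
    {x y : X} (w : G.Walk x y) : ‖φ x - φ y‖ ≤ (w.edges.map (normDiff φ)).sum := by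
  induction w with
  | nil => simp
  | @cons u v z _ p ih =>
    calc ‖φ u - φ z‖ ≤ ‖φ u - φ v‖ + ‖φ v - φ z‖ := norm_sub_le_norm_sub_add_norm_sub _ _ _
      _ ≤ _ := by simpa using ih

/-- Passing to the path `w.bypass` removes repeated edges. -/
theorem Walk.norm_sub_le_sum_normDiff_toFinset [DecidableEq X] {E : Type*}
    [SeminormedAddCommGroup E] (φ : X → E) {x y : X} (w : G.Walk x y) :
    ‖φ x - φ y‖ ≤ ∑ e ∈ w.edges.toFinset, normDiff φ e :=
  calc ‖φ x - φ y‖ ≤ (w.bypass.edges.map (normDiff φ)).sum := w.bypass.norm_sub_le_sum_normDiff φ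
    _ = ∑ e ∈ w.bypass.edges.toFinset, normDiff φ e :=
      (List.sum_toFinset _ w.bypass_isPath.edges_nodup).symm
    _ ≤ ∑ e ∈ w.edges.toFinset, normDiff φ e :=
      sum_le_sum_of_subset_of_nonneg
        (fun _ he => List.mem_toFinset.2 (w.edges_bypass_subset_edges (List.mem_toFinset.1 he)))
        (fun e _ _ => normDiff_nonneg φ e)

theorem Walk.norm_sub_sq_le_weightedLength_mul [DecidableEq X] {E : Type*}
    [SeminormedAddCommGroup E] (φ : X → E) {b : Sym2 X → ℝ} (hb : ∀ e ∈ G.edgeSet, 0 < b e)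
    {x y : X} (w : G.Walk x y) :
    ‖φ x - φ y‖ ^ 2 ≤ w.weightedLength b * ∑ e ∈ w.edges.toFinset, b e * normDiff φ e ^ 2 := by
  have hb' : ∀ e ∈ w.edges.toFinset, 0 < b e :=
    fun e he => hb e (w.edges_subset_edgeSet (List.mem_toFinset.1 he))
  calc ‖φ x - φ y‖ ^ 2 ≤ (∑ e ∈ w.edges.toFinset, normDiff φ e) ^ 2 :=
        pow_le_pow_left₀ (norm_nonneg _) (w.norm_sub_le_sum_normDiff_toFinset φ) 2
    _ ≤ (∑ e ∈ w.edges.toFinset, (b e)⁻¹) * ∑ e ∈ w.edges.toFinset, b e * normDiff φ e ^ 2 :=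
        sum_sq_le_sum_mul_sum_of_sq_le_mul _ (fun e he => (inv_pos.2 (hb' e he)).le)
          (fun e he => mul_nonneg (hb' e he).le (sq_nonneg _))
          (fun e he => by rw [inv_mul_cancel_left₀ (hb' e he).ne'])
    _ ≤ _ := mul_le_mul_of_nonneg_right (w.sum_inv_le_weightedLength hb)
        (sum_nonneg fun e he => mul_nonneg (hb' e he).le (sq_nonneg _))

end SimpleGraph

namespace SimpleGraph

variable {X : Type*} [Fintype X] (G : SimpleGraph X) [DecidableRel G.Adj]

noncomputable def dirichletForm {E : Type*} [SeminormedAddCommGroup E] (b : Sym2 X → ℝ)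
    (φ : X → E) : ℝ :=
  (1 / 2) * ∑ x, ∑ y, if G.Adj x y then b s(x, y) * ‖φ x - φ y‖ ^ 2 else 0

variable [DecidableEq X]

theorem sum_sum_ite_adj_eq_two_mul_sum_edgeFinset (F : Sym2 X → ℝ) :
    ∑ x, ∑ y, (if G.Adj x y then F s(x, y) else 0) = 2 * ∑ e ∈ G.edgeFinset, F e := by
  have hdarts : ∑ x, ∑ y, (if G.Adj x y then F s(x, y) else 0) = ∑ d : G.Dart, F d.edge := by
    rw [← Fintype.sum_prod_type', ← sum_filter]
    exact sum_bij' (fun p hp => ⟨p, (mem_filter.1 hp).2⟩) (fun d _ => d.toProd)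
      (by simp) (by simp) (by simp) (by simp) (by simp)
  rw [hdarts, ← sum_fiberwise_of_maps_to (g := Dart.edge) (t := G.edgeFinset)
    (fun d _ => mem_edgeFinset.2 d.edge_mem), mul_sum]
  refine sum_congr rfl fun e he => ?_
  rw [sum_congr rfl fun d hd => congrArg F (mem_filter.1 hd).2, sum_const,
    G.dart_edge_fiber_card e (mem_edgeFinset.1 he), two_nsmul, two_mul]

theorem sum_sum_norm_sub_sq_le {E : Type*} [SeminormedAddCommGroup E] [Nonempty X] (φ : X → E)
    {b : Sym2 X → ℝ} (hb : ∀ e ∈ G.edgeSet, 0 < b e) (γ : ∀ x y : X, G.Walk x y) {L K : ℝ}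
    (hlen : ∀ x y, (γ x y).weightedLength b ≤ L)
    (hcount : ∀ e ∈ G.edgeSet, (#{p : X × X | e ∈ (γ p.1 p.2).edges} : ℝ) ≤ K) :
    ∑ x, ∑ y, ‖φ x - φ y‖ ^ 2 ≤ L * K * ∑ e ∈ G.edgeFinset, b e * normDiff φ e ^ 2 := by
  have hL : 0 ≤ L := by
    obtain ⟨x⟩ := ‹Nonempty X›
    exact ((γ x x).weightedLength_nonneg hb).trans (hlen x x)
  have hT : ∀ p : X × X, (γ p.1 p.2).edges.toFinset ⊆ G.edgeFinset := fun p _ he =>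
    mem_edgeFinset.2 ((γ p.1 p.2).edges_subset_edgeSet (List.mem_toFinset.1 he))
  have hF : ∀ e ∈ G.edgeFinset, 0 ≤ b e * normDiff φ e ^ 2 := fun e he =>
    mul_nonneg (hb e (mem_edgeFinset.1 he)).le (sq_nonneg _)
  rw [← Fintype.sum_prod_type', mul_assoc]
  calc ∑ p : X × X, ‖φ p.1 - φ p.2‖ ^ 2
      ≤ ∑ p : X × X, L * ∑ e ∈ (γ p.1 p.2).edges.toFinset, b e * normDiff φ e ^ 2 :=
        sum_le_sum fun p _ => ((γ p.1 p.2).norm_sub_sq_le_weightedLength_mul φ hb).trans <|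
          mul_le_mul_of_nonneg_right (hlen p.1 p.2) <| sum_nonneg fun e he => hF e (hT p he)
    _ ≤ L * (K * ∑ e ∈ G.edgeFinset, b e * normDiff φ e ^ 2) := by
        rw [← mul_sum]
        refine mul_le_mul_of_nonneg_left (sum_sum_le_mul_sum _ _ (fun p _ => hT p) hF ?_) hL
        simpa using fun e he => hcount e (mem_edgeFinset.1 he)

theorem dirichletForm_eq_sum_edgeFinset {E : Type*} [SeminormedAddCommGroup E]
    (b : Sym2 X → ℝ) (φ : X → E) :
    G.dirichletForm b φ = ∑ e ∈ G.edgeFinset, b e * normDiff φ e ^ 2 := by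
  have h := G.sum_sum_ite_adj_eq_two_mul_sum_edgeFinset fun e => b e * normDiff φ e ^ 2
  simp only [normDiff_mk] at h
  rw [dirichletForm, h]
  ring

theorem dirichletForm_nonneg {E : Type*} [SeminormedAddCommGroup E] {b : Sym2 X → ℝ}
    (hb : ∀ e ∈ G.edgeSet, 0 < b e) (φ : X → E) : 0 ≤ G.dirichletForm b φ := by
  rw [dirichletForm_eq_sum_edgeFinset]
  exact sum_nonneg fun e he => mul_nonneg (hb e (mem_edgeFinset.1 he)).le (sq_nonneg _)

theorem two_mul_sumSqDev_le_mul_dirichletForm [Nonempty X] (φ : X → ℂ) {b : Sym2 X → ℝ}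
    (hb : ∀ e ∈ G.edgeSet, 0 < b e) (γ : ∀ x y : X, G.Walk x y) {L K : ℝ}
    (hlen : ∀ x y, (γ x y).weightedLength b ≤ L)
    (hcount : ∀ e ∈ G.edgeSet,
      (#{p : X × X | e ∈ (γ p.1 p.2).edges} : ℝ) ≤ K * Fintype.card X) :
    2 * sumSqDev φ ≤ L * K * G.dirichletForm b φ := by
  have h := G.sum_sum_norm_sub_sq_le φ hb γ hlen hcount
  rw [sum_sum_norm_sub_sq_eq_mul_sumSqDev, ← dirichletForm_eq_sum_edgeFinset] at h
  have hn : (0 : ℝ) < Fintype.card X := Nat.cast_pos.2 Fintype.card_pos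
  exact le_of_mul_le_mul_left (by linarith) hn

end SimpleGraph

theorem weighted_graph_poincare_inequality_general
    {X : Type*} [Fintype X] [DecidableEq X]
    (G : SimpleGraph X) [DecidableRel G.Adj]
    (b : Sym2 X → ℝ) (hb : ∀ e ∈ G.edgeSet, 0 < b e)
    (α β d : ℝ)
    -- d is the diameter of X in the weighted path metric
    (hd : d = ⨆ p : X × X, ⨅ w : G.Walk p.1 p.2, (w.edges.map fun e => (b e)⁻¹).sum)
    (γ : ∀ x y : X, G.Walk x y)
    -- each path has weighted length at most α d
    (hlen : ∀ x y : X, ((γ x y).edges.map fun e => (b e)⁻¹).sum ≤ α * d)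
    -- every edge lies on at most β d |X| of the paths
    (hcount : ∀ e ∈ G.edgeSet,
      ((Finset.univ.filter fun p : X × X => e ∈ (γ p.1 p.2).edges).card : ℝ) ≤
        β * d * (Fintype.card X : ℝ)) :
    1 / (α * β * d ^ 2) ≤
      sInf { r : ℝ | ∃ φ : X → ℂ,
        (∑ x, ‖φ x - (∑ y, φ y) / (Fintype.card X : ℂ)‖ ^ 2) ≠ 0 ∧
        r = ((1 / 2) * ∑ x, ∑ y, if G.Adj x y then b s(x, y) * ‖φ x - φ y‖ ^ 2 else 0) /
            (∑ x, ‖φ x - (∑ y, φ y) / (Fintype.card X : ℂ)‖ ^ 2) } := by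
  rcases subsingleton_or_nontrivial X with hX | hX
  · rw [hd.trans (G.iSup_iInf_weightedLength_eq_zero b), zero_pow two_ne_zero, mul_zero, div_zero]
    refine Real.sInf_nonneg ?_
    rintro _ ⟨φ, -, rfl⟩
    exact div_nonneg (G.dirichletForm_nonneg hb φ) (sumSqDev_nonneg φ)
  · obtain ⟨x₀, x₁, hx⟩ := exists_pair_ne X
    have hsingle : (Pi.single x₀ 1 : X → ℂ) x₀ ≠ (Pi.single x₀ 1 : X → ℂ) x₁ := by simp [hx.symm]
    refine le_csInf ⟨_, Pi.single x₀ 1, (sumSqDev_pos_of_ne hsingle).ne', rfl⟩ ?_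
    rintro _ ⟨φ, hV, rfl⟩
    change 1 / _ ≤ G.dirichletForm b φ / sumSqDev φ
    have hV : 0 < sumSqDev φ := (sumSqDev_nonneg φ).lt_of_ne' hV
    have hpoinc : 2 * sumSqDev φ ≤ α * β * d ^ 2 * G.dirichletForm b φ := by
      convert G.two_mul_sumSqDev_le_mul_dirichletForm φ hb γ hlen hcount using 2
      ring
    have hc : 0 < α * β * d ^ 2 :=
      pos_of_mul_pos_left (by linarith) (G.dirichletForm_nonneg hb φ)
    rw [div_le_div_iff₀ hc hV]
    linarith

/-- Discrete Poincaré inequality of Diaconis–Stroock type: let `(X,E)` be a finite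
connected graph with symmetric positive edge weights `b`, `Q(f) = (1/2)Σ b(x,y)|f(x)−f(y)|²`
the weighted Dirichlet form and `d` the diameter in the weighted path metric (edge `e`
contributing length `b(e)⁻¹`). If `Γ = (γ_{x,y})` is a family of walks, one joining each
ordered pair of vertices, with `|γ_{x,y}| ≤ α d` and every edge lying on at most `β d |X|`
of the walks, then the first non-zero eigenvalue
`μ₁ = inf { Q(φ)/‖φ − ⟨φ,φ₀⟩φ₀‖² : φ ≠ const }` satisfies `μ₁ ≥ 1/(αβd²)`. -/
theorem weighted_graph_poincare_inequality
    {X : Type*} [Fintype X] [Nonempty X] [DecidableEq X]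
    (G : SimpleGraph X) [DecidableRel G.Adj] (hconn : G.Connected)
    (b : Sym2 X → ℝ) (hb : ∀ e ∈ G.edgeSet, 0 < b e)
    (α β d : ℝ) (hα : 0 < α) (hβ : 0 < β)
    -- d is the diameter of X in the weighted path metric
    (hd : d = ⨆ p : X × X, ⨅ w : G.Walk p.1 p.2, (w.edges.map fun e => (b e)⁻¹).sum)
    (γ : ∀ x y : X, G.Walk x y)
    -- each path has weighted length at most α d
    (hlen : ∀ x y : X, ((γ x y).edges.map fun e => (b e)⁻¹).sum ≤ α * d)
    -- every edge lies on at most β d |X| of the paths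
    (hcount : ∀ e ∈ G.edgeSet,
      ((Finset.univ.filter fun p : X × X => e ∈ (γ p.1 p.2).edges).card : ℝ) ≤
        β * d * (Fintype.card X : ℝ)) :
    1 / (α * β * d ^ 2) ≤
      sInf { r : ℝ | ∃ φ : X → ℂ,
        (∑ x, ‖φ x - (∑ y, φ y) / (Fintype.card X : ℂ)‖ ^ 2) ≠ 0 ∧
        r = ((1 / 2) * ∑ x, ∑ y, if G.Adj x y then b s(x, y) * ‖φ x - φ y‖ ^ 2 else 0) /
            (∑ x, ‖φ x - (∑ y, φ y) / (Fintype.card X : ℂ)‖ ^ 2) } :=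
  weighted_graph_poincare_inequality_general G b hb α β d hd γ hlen hcount
end

section
/- Let X ⊂ ℤ² be X = {(i,j) : 1 ≤ i ≤ n, 1 ≤ j ≤ f(i)} where f : {1,…,n} → {1,…,m} is non-decreasing, with edges inherited from ℤ² (pairs at L¹-distance 1). Then the first non-zero eigenvalue of the discrete Neumann Laplacian on X satisfies μ_1 ≥ 1/((n + f(n) − 2)·max{n, f(n)}). -/
/-!
Canonical paths. Join two points `p`, `q` of the staircase by the hook that runs along the row of
the point in the left column to the column of the other one and then vertically; monotonicity of
`f` keeps the hook inside the staircase. Cauchy–Schwarz along the hook bounds `‖φ p - φ q‖²` by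
its length, at most `n + f n - 2`, times the energy of `φ` on its edges, and a horizontal
(vertical) edge lies on at most `2 n |X|` (`2 f(n) |X|`) hooks. Summing over all pairs and using
`∑_{p,q} ‖φ p - φ q‖² = 2 |X| ∑_p ‖φ p - mean‖²` gives the bound.
-/

open Finset

section Analysis

theorem sq_add_le_add_mul_add {a b u v A B : ℝ} (hu : 0 ≤ u) (hv : 0 ≤ v) (hA : 0 ≤ A)
    (hB : 0 ≤ B) (ha : a ^ 2 ≤ u * A) (hb : b ^ 2 ≤ v * B) :
    (a + b) ^ 2 ≤ (u + v) * (A + B) := by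
  have hab : (2 * (a * b)) ^ 2 ≤ (u * B + v * A) ^ 2 := by
    nlinarith [mul_le_mul ha hb (sq_nonneg b) (mul_nonneg hu hA), sq_nonneg (u * B - v * A)]
  nlinarith [abs_le_of_sq_le_sq' hab (by positivity)]

variable {E : Type*} [SeminormedAddCommGroup E]

theorem norm_sub_sq_le_mul_sum_norm_succ_sub_sq (g : ℕ → E) {a b : ℕ} (hab : a ≤ b) :
    ‖g b - g a‖ ^ 2 ≤ ((b - a : ℕ) : ℝ) * ∑ t ∈ Ico a b, ‖g (t + 1) - g t‖ ^ 2 := by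
  rw [← Finset.sum_Ico_sub g hab, ← Nat.card_Ico]
  calc ‖∑ t ∈ Ico a b, (g (t + 1) - g t)‖ ^ 2
      ≤ (∑ t ∈ Ico a b, ‖g (t + 1) - g t‖) ^ 2 := by gcongr; exact norm_sum_le _ _
    _ ≤ _ := sq_sum_le_card_mul_sum_sq

theorem norm_sub_sq_le_mul_sum_Ico_min_max (g : ℕ → E) (a b : ℕ) :
    ‖g a - g b‖ ^ 2 ≤
      ((max a b - min a b : ℕ) : ℝ) * ∑ t ∈ Ico (min a b) (max a b), ‖g (t + 1) - g t‖ ^ 2 := by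
  rcases le_total a b with hab | hab
  · rw [min_eq_left hab, max_eq_right hab, norm_sub_rev]
    exact norm_sub_sq_le_mul_sum_norm_succ_sub_sq g hab
  · rw [min_eq_right hab, max_eq_left hab]
    exact norm_sub_sq_le_mul_sum_norm_succ_sub_sq g hab

end Analysis

theorem sum_sum_le_mul_sum {ι κ : Type*} [DecidableEq κ] (W : Finset ι) (S : Finset κ)
    (G : ι → Finset κ) (F : κ → ℝ) (K : ℝ) (hG : ∀ a ∈ W, G a ⊆ S) (hF : ∀ e ∈ S, 0 ≤ F e)
    (hK : ∀ e ∈ S, (#{a ∈ W | e ∈ G a} : ℝ) ≤ K) :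
    ∑ a ∈ W, ∑ e ∈ G a, F e ≤ K * ∑ e ∈ S, F e := by
  calc ∑ a ∈ W, ∑ e ∈ G a, F e = ∑ e ∈ S, #{a ∈ W | e ∈ G a} * F e := by
        rw [Finset.sum_comm' (t' := S) (s' := fun e => {a ∈ W | e ∈ G a})
          fun a e => ⟨fun ⟨ha, he⟩ => ⟨mem_filter.2 ⟨ha, he⟩, hG a ha he⟩,
            fun ⟨h, _⟩ => mem_filter.1 h⟩]
        simp only [Finset.sum_const, nsmul_eq_mul]
    _ ≤ ∑ e ∈ S, K * F e := Finset.sum_le_sum fun e he => by gcongr; exacts [hF e he, hK e he]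
    _ = K * ∑ e ∈ S, F e := (Finset.mul_sum ..).symm

theorem card_filter_le_of_fst_mem_or_snd_mem {α : Type*} [DecidableEq α] (X S : Finset α)
    (P : α × α → Prop) [DecidablePred P] (hP : ∀ a ∈ X ×ˢ X, P a → a.1 ∈ S ∨ a.2 ∈ S) :
    #{a ∈ X ×ˢ X | P a} ≤ 2 * #S * #X := by
  calc #{a ∈ X ×ˢ X | P a} ≤ #(S ×ˢ X ∪ X ×ˢ S) := by
        refine card_le_card fun a ha => ?_
        obtain ⟨haX, hPa⟩ := mem_filter.1 ha
        have := mem_product.1 haX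
        rcases hP a haX hPa with h | h
        · exact mem_union_left _ (mem_product.2 ⟨h, this.2⟩)
        · exact mem_union_right _ (mem_product.2 ⟨this.1, h⟩)
    _ ≤ #(S ×ˢ X) + #(X ×ˢ S) := card_union_le _ _
    _ = 2 * #S * #X := by rw [card_product, card_product]; ring

theorem card_filter_snd_eq_le {α β : Type*} [DecidableEq β] {X : Finset (α × β)}
    {A : Finset α} {B : Finset β} (hX : X ⊆ A ×ˢ B) (b : β) : #{x ∈ X | x.2 = b} ≤ #A := by
  calc #{x ∈ X | x.2 = b} ≤ #(A ×ˢ {b}) := by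
        refine card_le_card fun x hx => ?_
        obtain ⟨hxX, rfl⟩ := mem_filter.1 hx
        exact mem_product.2 ⟨(mem_product.1 (hX hxX)).1, mem_singleton_self _⟩
    _ = #A := by rw [card_product, card_singleton, mul_one]

theorem card_filter_fst_eq_le {α β : Type*} [DecidableEq α] {X : Finset (α × β)}
    {A : Finset α} {B : Finset β} (hX : X ⊆ A ×ˢ B) (a : α) : #{x ∈ X | x.1 = a} ≤ #B := by
  calc #{x ∈ X | x.1 = a} ≤ #({a} ×ˢ B) := by
        refine card_le_card fun x hx => ?_
        obtain ⟨hxX, rfl⟩ := mem_filter.1 hx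
        exact mem_product.2 ⟨mem_singleton_self _, (mem_product.1 (hX hxX)).2⟩
    _ = #B := by rw [card_product, card_singleton, one_mul]

theorem sum_sum_norm_sub_sq_eq {ι 𝕜 E : Type*} [RCLike 𝕜] [NormedAddCommGroup E]
    [InnerProductSpace 𝕜 E] (s : Finset ι) (φ : ι → E) :
    ∑ p ∈ s, ∑ q ∈ s, ‖φ p - φ q‖ ^ 2 =
      2 * #s * ∑ p ∈ s, ‖φ p - (#s : 𝕜)⁻¹ • ∑ q ∈ s, φ q‖ ^ 2 := by
  set ψ : ι → E := fun p => φ p - (#s : 𝕜)⁻¹ • ∑ q ∈ s, φ q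
  have hψ : ∑ q ∈ s, ψ q = 0 := by
    rcases s.eq_empty_or_nonempty with rfl | hs
    · simp
    rw [sum_sub_distrib, sum_const, ← Nat.cast_smul_eq_nsmul 𝕜,
      smul_inv_smul₀ (by simpa using hs.ne_empty), sub_self]
  have hrow : ∀ p, ∑ q ∈ s, ‖ψ p - ψ q‖ ^ 2 = #s * ‖ψ p‖ ^ 2 + ∑ q ∈ s, ‖ψ q‖ ^ 2 := by
    intro p
    have hinner : ∑ q ∈ s, RCLike.re (inner 𝕜 (ψ p) (ψ q)) = 0 := by
      rw [← map_sum, ← inner_sum, hψ, inner_zero_right, map_zero]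
    simp only [@norm_sub_sq 𝕜, sum_add_distrib, sum_sub_distrib, ← mul_sum, hinner, sum_const,
      nsmul_eq_mul]
    ring
  calc ∑ p ∈ s, ∑ q ∈ s, ‖φ p - φ q‖ ^ 2 = ∑ p ∈ s, ∑ q ∈ s, ‖ψ p - ψ q‖ ^ 2 := by
        simp only [ψ, sub_sub_sub_cancel_right]
    _ = 2 * #s * ∑ p ∈ s, ‖ψ p‖ ^ 2 := by
        simp only [hrow, sum_add_distrib, ← mul_sum, sum_const, nsmul_eq_mul]
        ring

theorem sum_norm_sub_sq_ne_zero {ι E : Type*} [NormedAddCommGroup E] {s : Finset ι}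
    {φ : ι → E} {p q : ι} (hp : p ∈ s) (hq : q ∈ s) (hpq : φ p ≠ φ q) (c : E) :
    ∑ r ∈ s, ‖φ r - c‖ ^ 2 ≠ 0 := by
  intro h
  have hc : ∀ r ∈ s, φ r = c := fun r hr => by
    simpa [sub_eq_zero] using (sum_eq_zero_iff_of_nonneg fun r _ => sq_nonneg ‖φ r - c‖).1 h r hr
  exact hpq ((hc p hp).trans (hc q hq).symm)

theorem one_div_le_div_of_le_mul {d k q : ℝ} (hd : 0 < d) (hk : 0 ≤ k) (h : d ≤ k * q) :
    1 / k ≤ q / d := by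
  have hk' : 0 < k := hk.lt_of_ne (by rintro rfl; simp at h; linarith)
  rw [div_le_div_iff₀ hk' hd]
  linarith

theorem le_sInf_of_nonempty_or_nonpos {s : Set ℝ} {a : ℝ} (hs : s.Nonempty ∨ a ≤ 0)
    (h : ∀ x ∈ s, a ≤ x) : a ≤ sInf s :=
  hs.elim (le_csInf · h) (Real.le_sInf h)

/-- The corner of the hook from `p` to `q`. Its edges are recorded by their left, respectively
lower, endpoints in `hookHorizontal` and `hookVertical`. -/
def hookCorner (p q : ℕ × ℕ) : ℕ × ℕ := (max p.1 q.1, if p.1 ≤ q.1 then p.2 else q.2)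

def hookHorizontal (p q : ℕ × ℕ) : Finset (ℕ × ℕ) :=
  (Ico (min p.1 q.1) (max p.1 q.1)).map (Function.Embedding.sectL ℕ (hookCorner p q).2)

def hookVertical (p q : ℕ × ℕ) : Finset (ℕ × ℕ) :=
  (Ico (min p.2 q.2) (max p.2 q.2)).map (Function.Embedding.sectR (hookCorner p q).1 ℕ)

section Hook

variable {E : Type*} [SeminormedAddCommGroup E]

theorem norm_sub_sq_le_hook (φ : ℕ × ℕ → E) (p q : ℕ × ℕ) :
    ‖φ p - φ q‖ ^ 2 ≤ ((max p.1 q.1 - min p.1 q.1 + (max p.2 q.2 - min p.2 q.2) : ℕ) : ℝ) *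
      (∑ e ∈ hookHorizontal p q, ‖φ (e + (1, 0)) - φ e‖ ^ 2 +
        ∑ e ∈ hookVertical p q, ‖φ (e + (0, 1)) - φ e‖ ^ 2) := by
  set c := hookCorner p q
  have hsplit : φ p - φ q = (φ (p.1, c.2) - φ (q.1, c.2)) + (φ (c.1, p.2) - φ (c.1, q.2)) := by
    obtain ⟨i, j⟩ := p
    obtain ⟨k, l⟩ := q
    simp only [c, hookCorner]
    split_ifs with hik
    · rw [max_eq_right hik]; abel
    · rw [max_eq_left (le_of_not_ge hik)]; abel
  have hH : ∑ e ∈ hookHorizontal p q, ‖φ (e + (1, 0)) - φ e‖ ^ 2 =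
      ∑ t ∈ Ico (min p.1 q.1) (max p.1 q.1), ‖φ (t + 1, c.2) - φ (t, c.2)‖ ^ 2 := by
    simp only [hookHorizontal, sum_map, Function.Embedding.sectL_apply, Prod.mk_add_mk, add_zero, c]
  have hV : ∑ e ∈ hookVertical p q, ‖φ (e + (0, 1)) - φ e‖ ^ 2 =
      ∑ s ∈ Ico (min p.2 q.2) (max p.2 q.2), ‖φ (c.1, s + 1) - φ (c.1, s)‖ ^ 2 := by
    simp only [hookVertical, sum_map, Function.Embedding.sectR_apply, Prod.mk_add_mk, add_zero, c]
  rw [hsplit, Nat.cast_add, hH, hV]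
  calc _ ≤ (‖φ (p.1, c.2) - φ (q.1, c.2)‖ + ‖φ (c.1, p.2) - φ (c.1, q.2)‖) ^ 2 := by
        gcongr; exact norm_add_le _ _
    _ ≤ _ := sq_add_le_add_mul_add (Nat.cast_nonneg _) (Nat.cast_nonneg _)
        (sum_nonneg fun _ _ => sq_nonneg _) (sum_nonneg fun _ _ => sq_nonneg _)
        (norm_sub_sq_le_mul_sum_Ico_min_max (fun t => φ (t, c.2)) p.1 q.1)
        (norm_sub_sq_le_mul_sum_Ico_min_max (fun s => φ (c.1, s)) p.2 q.2)

end Hook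

def staircase (n : ℕ) (f : ℕ → ℕ) : Finset (ℕ × ℕ) :=
  (Icc 1 n ×ˢ Icc 1 (f n)).filter fun p => p.2 ≤ f p.1

def directionalEnergy {E : Type*} [SeminormedAddCommGroup E] (X : Finset (ℕ × ℕ))
    (φ : ℕ × ℕ → E) (d : ℕ × ℕ) : ℝ :=
  ∑ e ∈ X with e + d ∈ X, ‖φ (e + d) - φ e‖ ^ 2

theorem directionalEnergy_nonneg {E : Type*} [SeminormedAddCommGroup E] (X : Finset (ℕ × ℕ))
    (φ : ℕ × ℕ → E) (d : ℕ × ℕ) : 0 ≤ directionalEnergy X φ d :=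
  sum_nonneg fun _ _ => sq_nonneg _

section Staircase

variable {n : ℕ} {f : ℕ → ℕ}

theorem mem_staircase (hf : MonotoneOn f (Set.Icc 1 n)) {p : ℕ × ℕ} :
    p ∈ staircase n f ↔ 1 ≤ p.1 ∧ p.1 ≤ n ∧ 1 ≤ p.2 ∧ p.2 ≤ f p.1 := by
  simp only [staircase, mem_filter, mem_product, mem_Icc]
  constructor
  · rintro ⟨⟨⟨h₁, h₂⟩, h₃, -⟩, h₄⟩
    exact ⟨h₁, h₂, h₃, h₄⟩
  · rintro ⟨h₁, h₂, h₃, h₄⟩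
    exact ⟨⟨⟨h₁, h₂⟩, h₃, h₄.trans (hf ⟨h₁, h₂⟩ ⟨h₁.trans h₂, le_rfl⟩ h₂)⟩, h₄⟩

theorem hookHorizontal_subset (hf : MonotoneOn f (Set.Icc 1 n)) {p q : ℕ × ℕ}
    (hp : p ∈ staircase n f) (hq : q ∈ staircase n f) :
    hookHorizontal p q ⊆ {e ∈ staircase n f | e + (1, 0) ∈ staircase n f} := by
  rw [mem_staircase hf] at hp hq
  have hrow : 1 ≤ (hookCorner p q).2 ∧ (hookCorner p q).2 ≤ f (min p.1 q.1) := by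
    simp only [hookCorner]
    split_ifs with h
    · exact ⟨hp.2.2.1, by rw [min_eq_left h]; exact hp.2.2.2⟩
    · exact ⟨hq.2.2.1, by rw [min_eq_right (le_of_not_ge h)]; exact hq.2.2.2⟩
  intro e he
  obtain ⟨t, ht, rfl⟩ := mem_map.1 he
  rw [mem_Ico] at ht
  have hmin : min p.1 q.1 ∈ Set.Icc 1 n := ⟨le_min hp.1 hq.1, min_le_left _ _ |>.trans hp.2.1⟩
  have hmax : max p.1 q.1 ≤ n := max_le hp.2.1 hq.2.1
  simp only [mem_filter, mem_staircase hf, Function.Embedding.sectL_apply, Prod.mk_add_mk,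
    add_zero]
  refine ⟨⟨by omega, by omega, hrow.1, hrow.2.trans (hf hmin ⟨by omega, by omega⟩ ht.1)⟩,
    by omega, by omega, hrow.1, hrow.2.trans (hf hmin ⟨by omega, by omega⟩ (by omega))⟩

theorem hookVertical_subset (hf : MonotoneOn f (Set.Icc 1 n)) {p q : ℕ × ℕ}
    (hp : p ∈ staircase n f) (hq : q ∈ staircase n f) :
    hookVertical p q ⊆ {e ∈ staircase n f | e + (0, 1) ∈ staircase n f} := by
  rw [mem_staircase hf] at hp hq
  have hmax : max p.1 q.1 ∈ Set.Icc 1 n := ⟨hp.1.trans (le_max_left _ _), max_le hp.2.1 hq.2.1⟩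
  have hpf : p.2 ≤ f (max p.1 q.1) :=
    hp.2.2.2.trans (hf ⟨hp.1, hp.2.1⟩ hmax (le_max_left _ _))
  have hqf : q.2 ≤ f (max p.1 q.1) :=
    hq.2.2.2.trans (hf ⟨hq.1, hq.2.1⟩ hmax (le_max_right _ _))
  intro e he
  obtain ⟨s, hs, rfl⟩ := mem_map.1 he
  rw [mem_Ico] at hs
  simp only [mem_filter, mem_staircase hf, Function.Embedding.sectR_apply, Prod.mk_add_mk,
    add_zero, hookCorner]
  obtain ⟨-, hmax⟩ := hmax
  omega

theorem card_filter_mem_hookHorizontal_le (e : ℕ × ℕ) :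
    #{a ∈ staircase n f ×ˢ staircase n f | e ∈ hookHorizontal a.1 a.2} ≤
      2 * n * #(staircase n f) := by
  set X := staircase n f
  calc _ ≤ 2 * #{x ∈ X | x.2 = e.2} * #X := by
        refine card_filter_le_of_fst_mem_or_snd_mem _ _ _ fun a ha he => ?_
        obtain ⟨t, -, rfl⟩ := mem_map.1 he
        simp only [mem_filter, Function.Embedding.sectL_apply, hookCorner]
        have := mem_product.1 ha
        split_ifs <;> simp [this]
    _ ≤ 2 * #(Icc 1 n) * #X := by gcongr; exact card_filter_snd_eq_le (filter_subset _ _) e.2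
    _ = 2 * n * #X := by rw [Nat.card_Icc, Nat.add_sub_cancel]

theorem card_filter_mem_hookVertical_le (e : ℕ × ℕ) :
    #{a ∈ staircase n f ×ˢ staircase n f | e ∈ hookVertical a.1 a.2} ≤
      2 * f n * #(staircase n f) := by
  set X := staircase n f
  calc _ ≤ 2 * #{x ∈ X | x.1 = e.1} * #X := by
        refine card_filter_le_of_fst_mem_or_snd_mem _ _ _ fun a ha he => ?_
        obtain ⟨s, -, rfl⟩ := mem_map.1 he
        simp only [mem_filter, Function.Embedding.sectR_apply, hookCorner]
        have := mem_product.1 ha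
        rcases max_choice a.1.1 a.2.1 with h | h <;> simp [this, h]
    _ ≤ 2 * #(Icc 1 (f n)) * #X := by
        gcongr; exact card_filter_fst_eq_le (filter_subset _ _) e.1
    _ = 2 * f n * #X := by rw [Nat.card_Icc, Nat.add_sub_cancel]

end Staircase

section Energy

variable {E : Type*} [SeminormedAddCommGroup E]

theorem sum_sum_ite_eq_add_eq_directionalEnergy (X : Finset (ℕ × ℕ)) (φ : ℕ × ℕ → E)
    (d : ℕ × ℕ) :
    ∑ p ∈ X, ∑ q ∈ X, (if p = q + d then ‖φ p - φ q‖ ^ 2 else 0) = directionalEnergy X φ d := by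
  rw [sum_comm, directionalEnergy, sum_filter]
  exact sum_congr rfl fun q _ => sum_ite_eq' X (q + d) fun p => ‖φ p - φ q‖ ^ 2

-- With truncated subtraction the condition reads `|p.1 - q.1| + |p.2 - q.2| = 1`.
theorem sum_sum_ite_adjacent_eq (X : Finset (ℕ × ℕ)) (φ : ℕ × ℕ → E) :
    ∑ p ∈ X, ∑ q ∈ X,
      (if (p.1 - q.1) + (q.1 - p.1) + (p.2 - q.2) + (q.2 - p.2) = 1
        then ‖φ p - φ q‖ ^ 2 else 0) =
      2 * (directionalEnergy X φ (1, 0) + directionalEnergy X φ (0, 1)) := by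
  have hsplit : ∀ p q : ℕ × ℕ,
      (if (p.1 - q.1) + (q.1 - p.1) + (p.2 - q.2) + (q.2 - p.2) = 1
        then ‖φ p - φ q‖ ^ 2 else 0) =
      ((if p = q + (1, 0) then ‖φ p - φ q‖ ^ 2 else 0) +
        (if p = q + (0, 1) then ‖φ p - φ q‖ ^ 2 else 0)) +
      ((if q = p + (1, 0) then ‖φ q - φ p‖ ^ 2 else 0) +
        (if q = p + (0, 1) then ‖φ q - φ p‖ ^ 2 else 0)) := by
    rintro ⟨i, j⟩ ⟨k, l⟩
    rw [norm_sub_rev (φ (k, l))]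
    simp only [Prod.mk_add_mk, Prod.mk.injEq, add_zero]
    split_ifs <;> first | (exfalso; omega) | ring
  simp only [hsplit, sum_add_distrib, sum_comm (γ := ℕ × ℕ) (s := X) (t := X)
    (f := fun p q => if q = p + _ then ‖φ q - φ p‖ ^ 2 else 0),
    sum_sum_ite_eq_add_eq_directionalEnergy]
  ring

end Energy

section Poincare

variable {n : ℕ} {f : ℕ → ℕ}

theorem sum_sum_norm_sub_sq_le_staircase {E : Type*} [SeminormedAddCommGroup E]
    (hf : MonotoneOn f (Set.Icc 1 n)) (φ : ℕ × ℕ → E) :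
    ∑ p ∈ staircase n f, ∑ q ∈ staircase n f, ‖φ p - φ q‖ ^ 2 ≤
      2 * (n + f n - 2 : ℕ) * max (n : ℝ) (f n) * #(staircase n f) *
        (directionalEnergy (staircase n f) φ (1, 0) +
          directionalEnergy (staircase n f) φ (0, 1)) := by
  set X := staircase n f
  set H : (ℕ × ℕ) × (ℕ × ℕ) → ℝ := fun a => ∑ e ∈ hookHorizontal a.1 a.2, ‖φ (e + (1, 0)) - φ e‖ ^ 2
  set V : (ℕ × ℕ) × (ℕ × ℕ) → ℝ := fun a => ∑ e ∈ hookVertical a.1 a.2, ‖φ (e + (0, 1)) - φ e‖ ^ 2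
  have hpair : ∀ a ∈ X ×ˢ X, ‖φ a.1 - φ a.2‖ ^ 2 ≤ (n + f n - 2 : ℕ) * (H a + V a) := by
    intro a ha
    obtain ⟨hp, hq⟩ := mem_product.1 ha
    refine (norm_sub_sq_le_hook φ a.1 a.2).trans ?_
    gcongr
    have hp := mem_product.1 (filter_subset _ _ hp)
    have hq := mem_product.1 (filter_subset _ _ hq)
    simp only [mem_Icc] at hp hq
    omega
  have hH : ∑ a ∈ X ×ˢ X, H a ≤ 2 * n * #X * directionalEnergy X φ (1, 0) :=
    sum_sum_le_mul_sum _ _ _ _ _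
      (fun a ha => hookHorizontal_subset hf (mem_product.1 ha).1 (mem_product.1 ha).2)
      (fun _ _ => sq_nonneg _)
      (fun e _ => by exact_mod_cast card_filter_mem_hookHorizontal_le (n := n) (f := f) e)
  have hV : ∑ a ∈ X ×ˢ X, V a ≤ 2 * f n * #X * directionalEnergy X φ (0, 1) :=
    sum_sum_le_mul_sum _ _ _ _ _
      (fun a ha => hookVertical_subset hf (mem_product.1 ha).1 (mem_product.1 ha).2)
      (fun _ _ => sq_nonneg _)
      (fun e _ => by exact_mod_cast card_filter_mem_hookVertical_le (n := n) (f := f) e)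
  calc ∑ p ∈ X, ∑ q ∈ X, ‖φ p - φ q‖ ^ 2 = ∑ a ∈ X ×ˢ X, ‖φ a.1 - φ a.2‖ ^ 2 := by
        rw [sum_product]
    _ ≤ ∑ a ∈ X ×ˢ X, (n + f n - 2 : ℕ) * (H a + V a) := by gcongr with a ha; exact hpair a ha
    _ = (n + f n - 2 : ℕ) * (∑ a ∈ X ×ˢ X, H a + ∑ a ∈ X ×ˢ X, V a) := by
        rw [← mul_sum, sum_add_distrib]
    _ ≤ (n + f n - 2 : ℕ) * (2 * n * #X * directionalEnergy X φ (1, 0) +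
          2 * f n * #X * directionalEnergy X φ (0, 1)) := by gcongr
    _ ≤ (n + f n - 2 : ℕ) * (2 * max (n : ℝ) (f n) * #X * directionalEnergy X φ (1, 0) +
          2 * max (n : ℝ) (f n) * #X * directionalEnergy X φ (0, 1)) := by
        have := directionalEnergy_nonneg X φ (1, 0)
        have := directionalEnergy_nonneg X φ (0, 1)
        gcongr
        exacts [le_max_left _ _, le_max_right _ _]
    _ = _ := by ring

theorem le_rayleighQuotient_staircase {𝕜 : Type*} [RCLike 𝕜] (hf : MonotoneOn f (Set.Icc 1 n))
    (φ : ℕ × ℕ → 𝕜)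
    (hden : (∑ p ∈ staircase n f,
      ‖φ p - (∑ q ∈ staircase n f, φ q) / (#(staircase n f) : 𝕜)‖ ^ 2) ≠ 0) :
    (1 : ℝ) / (((n + f n - 2 : ℕ) : ℝ) * max (n : ℝ) ((f n : ℕ) : ℝ)) ≤
      ((1 / 2) * ∑ p ∈ staircase n f, ∑ q ∈ staircase n f,
          if (p.1 - q.1) + (q.1 - p.1) + (p.2 - q.2) + (q.2 - p.2) = 1
          then ‖φ p - φ q‖ ^ 2 else 0) /
        (∑ p ∈ staircase n f, ‖φ p - (∑ q ∈ staircase n f, φ q) / (#(staircase n f) : 𝕜)‖ ^ 2) := by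
  set X := staircase n f
  set den := ∑ p ∈ X, ‖φ p - (∑ q ∈ X, φ q) / (#X : 𝕜)‖ ^ 2
  have hN : (0 : ℝ) < #X := by
    exact_mod_cast card_pos.2 (nonempty_of_sum_ne_zero hden)
  have hpair : ∑ p ∈ X, ∑ q ∈ X, ‖φ p - φ q‖ ^ 2 = 2 * #X * den := by
    simp only [den, div_eq_inv_mul, ← smul_eq_mul (a := ((#X : 𝕜))⁻¹)]
    exact sum_sum_norm_sub_sq_eq X φ
  rw [sum_sum_ite_adjacent_eq]
  refine one_div_le_div_of_le_mul ((sum_nonneg fun _ _ => sq_nonneg _).lt_of_ne' hden)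
    (by positivity) ?_
  have hcanon := sum_sum_norm_sub_sq_le_staircase hf φ
  rw [hpair] at hcanon
  -- cancel the positive factor `2 * #X`
  nlinarith

end Poincare

/-- Poincaré-type lower bound for the staircase region
`X = {(i,j) : 1 ≤ i ≤ n, 1 ≤ j ≤ f(i)} ⊂ ℤ²` with `f` non-decreasing: the first non-zero
eigenvalue of the discrete Neumann Laplacian (characterized as the infimum of the Rayleigh
quotient `Q(φ)/‖φ − mean‖²` over non-constant `φ`) satisfies
`μ₁ ≥ 1/((n + f(n) − 2)·max(n, f(n)))`. -/
theorem staircase_first_eigenvalue_lower_bound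
    (n : ℕ) (hn : 1 ≤ n) (f : ℕ → ℕ) (hf1 : ∀ i, 1 ≤ f i)
    (hmono : ∀ i j, 1 ≤ i → i ≤ j → j ≤ n → f i ≤ f j)
    (X : Finset (ℕ × ℕ))
    (hX : X = (Finset.Icc 1 n ×ˢ Finset.Icc 1 (f n)).filter fun p => p.2 ≤ f p.1) :
    (1 : ℝ) / (((n + f n - 2 : ℕ) : ℝ) * max (n : ℝ) ((f n : ℕ) : ℝ)) ≤
      sInf { r : ℝ | ∃ φ : ℕ × ℕ → ℂ,
        (∑ p ∈ X, ‖φ p - (∑ q ∈ X, φ q) / (X.card : ℂ)‖ ^ 2) ≠ 0 ∧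
        r = ((1 / 2) * ∑ p ∈ X, ∑ q ∈ X,
              if (p.1 - q.1) + (q.1 - p.1) + (p.2 - q.2) + (q.2 - p.2) = 1
              then ‖φ p - φ q‖ ^ 2 else 0) /
            (∑ p ∈ X, ‖φ p - (∑ q ∈ X, φ q) / (X.card : ℂ)‖ ^ 2) } := by
  obtain rfl : X = staircase n f := hX
  have hf : MonotoneOn f (Set.Icc 1 n) := fun i hi j hj hij => hmono i j hi.1 hij hj.2
  refine le_sInf_of_nonempty_or_nonpos ?_ fun r ⟨φ, hden, hr⟩ =>
    hr ▸ le_rayleighQuotient_staircase hf φ hden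
  rcases eq_or_ne (n + f n - 2) 0 with hL | hL
  · right
    simp [hL]
  · left
    have hcorner : ((n, f n) : ℕ × ℕ) ≠ (1, 1) := fun h => hL <| by
      obtain ⟨h₁, h₂⟩ := Prod.mk.inj h
      omega
    refine ⟨_, fun p => if p = (1, 1) then 1 else 0,
      sum_norm_sub_sq_ne_zero (p := (1, 1)) (q := (n, f n))
        ((mem_staircase hf).2 ⟨le_rfl, hn, le_rfl, hf1 1⟩)
        ((mem_staircase hf).2 ⟨hn, le_rfl, hf1 n, le_rfl⟩) (by simp [hcorner]) _, rfl⟩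
end
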